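/- arXiv:math/0404538 — 7 statements merged into one kernel-verified Lean document; each statement's English description precedes it below -/
import Mathlib

section
/- Let a₁₁, a₂₂, a₃₃, a₁₂, a₁₃, a₂₃ be integers (and set a_ji := a_ij). Let A be an associative unital ℚ-algebra containing elements e₁, e₂, e₃ that satisfy, for every even permutation (i,j,k) of (1,2,3), the Brandt relations: e_i² = a_jk·e_i − a_jj·a_kk, e_i·e_j = a_kk·(a_ij − e_k), and e_j·e_i = a_1k·e₁ + a_2k·e₂ + a_3k·e₃ − a_ik·a_jk. Then for all x₀, x₁, x₂, x₃ ∈ ℚ, writing α = x₀·1 + x₁e₁ + x₂e₂ + x₃e₃ and t(α) = 2x₀ + a₂₃x₁ + a₁₃x₂ + a₁₂x₃, one has the identity (2α − t(α)·1)² = q̃(x₁,x₂,x₃)·1 in A, where q̃(x₁,x₂,x₃) = (a₂₃² − 4a₂₂a₃₃)x₁² + (a₁₃² − 4a₁₁a₃₃)x₂² + (a₁₂² − 4a₁₁a₂₂)x₃² + 2(2a₁₂a₃₃ − a₁₃a₂₃)x₁x₂ + 2(2a₁₃a₂₂ − a₁₂a₂₃)x₁x₃ + 2(2a₁₁a₂₃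 − a₁₂a₁₃)x₂x₃. (This is the identity tr(α)² − 4·nr(α) = (0 ⊥ q̃)(x₀,x₁,x₂,x₃) on the even Clifford order C₀(f) attached to the ternary form f = Σ a_ij X_i X_j, since on such an algebra tr(α) = t(α) and (2α − tr(α))² = (tr(α)² − 4 nr(α))·1.) -/
/-- **Brandt relations / even Clifford order identity.**
If `e₁, e₂, e₃` in a ℚ-algebra `A` satisfy the Brandt relations of the even Clifford
algebra of the ternary form `f = Σ aᵢⱼ Xᵢ Xⱼ`, then for `α = x₀ + x₁e₁ + x₂e₂ + x₃e₃`
and `t(α) = 2x₀ + a₂₃x₁ + a₁₃x₂ + a₁₂x₃` one has `(2α − t(α)·1)² = q̃(x₁,x₂,x₃)·1`. -/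
theorem brandt_trace_norm_identity
    (a11 a22 a33 a12 a13 a23 : ℤ)
    (A : Type*) [Ring A] [Algebra ℚ A] (e1 e2 e3 : A)
    -- relations for the even permutation (i,j,k) = (1,2,3)
    (h1 : e1 ^ 2 = (a23 : ℚ) • e1 - algebraMap ℚ A ((a22 : ℚ) * (a33 : ℚ)))
    (h12 : e1 * e2 = (a33 : ℚ) • (algebraMap ℚ A (a12 : ℚ) - e3))
    (h21 : e2 * e1 = (a13 : ℚ) • e1 + (a23 : ℚ) • e2 + (a33 : ℚ) • e3
            - algebraMap ℚ A ((a13 : ℚ) * (a23 : ℚ)))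
    -- relations for the even permutation (i,j,k) = (2,3,1)
    (h2 : e2 ^ 2 = (a13 : ℚ) • e2 - algebraMap ℚ A ((a33 : ℚ) * (a11 : ℚ)))
    (h23 : e2 * e3 = (a11 : ℚ) • (algebraMap ℚ A (a23 : ℚ) - e1))
    (h32 : e3 * e2 = (a11 : ℚ) • e1 + (a12 : ℚ) • e2 + (a13 : ℚ) • e3
            - algebraMap ℚ A ((a12 : ℚ) * (a13 : ℚ)))
    -- relations for the even permutation (i,j,k) = (3,1,2)
    (h3 : e3 ^ 2 = (a12 : ℚ) • e3 - algebraMap ℚ A ((a11 : ℚ) * (a22 : ℚ)))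
    (h31 : e3 * e1 = (a22 : ℚ) • (algebraMap ℚ A (a13 : ℚ) - e2))
    (h13 : e1 * e3 = (a12 : ℚ) • e1 + (a22 : ℚ) • e2 + (a23 : ℚ) • e3
            - algebraMap ℚ A ((a23 : ℚ) * (a12 : ℚ)))
    (x0 x1 x2 x3 : ℚ) :
    (2 • (algebraMap ℚ A x0 + x1 • e1 + x2 • e2 + x3 • e3)
        - algebraMap ℚ A (2 * x0 + (a23 : ℚ) * x1 + (a13 : ℚ) * x2 + (a12 : ℚ) * x3)) ^ 2
      = algebraMap ℚ A
          (((a23 : ℚ) ^ 2 - 4 * (a22 : ℚ) * (a33 : ℚ)) * x1 ^ 2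
            + ((a13 : ℚ) ^ 2 - 4 * (a11 : ℚ) * (a33 : ℚ)) * x2 ^ 2
            + ((a12 : ℚ) ^ 2 - 4 * (a11 : ℚ) * (a22 : ℚ)) * x3 ^ 2
            + 2 * (2 * (a12 : ℚ) * (a33 : ℚ) - (a13 : ℚ) * (a23 : ℚ)) * x1 * x2
            + 2 * (2 * (a13 : ℚ) * (a22 : ℚ) - (a12 : ℚ) * (a23 : ℚ)) * x1 * x3
            + 2 * (2 * (a11 : ℚ) * (a23 : ℚ) - (a12 : ℚ) * (a13 : ℚ)) * x2 * x3) := by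
  simp only [Algebra.algebraMap_eq_smul_one] at h1 h12 h21 h2 h23 h32 h3 h31 h13 ⊢
  rw [sq] at h1 h2 h3
  simp only [smul_sub, smul_add, smul_smul] at h1 h12 h21 h2 h23 h32 h3 h31 h13
  simp only [sq, two_smul, mul_add, add_mul, sub_mul, mul_sub, smul_mul_assoc,
    mul_smul_comm, one_mul, mul_one, h1, h12, h21, h2, h23, h32, h3, h31, h13,
    smul_sub, smul_add, smul_smul]
  module
end

section
/- (Brandt, t ≤ h) Let a, b be nonzero rationals, A = ℍ[ℚ, a, b], and O any maximal order of A. Then the number of conjugacy classes of maximal orders of A is at most the number of equivalence classes of left O-ideals; i.e., t(A) ≤ h(O) (as an inequality of cardinalities). -/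
open scoped Quaternion

/-- An order in the quaternion algebra `ℍ[ℚ, a, b]`: a subring (hence containing `1`)
which is finitely generated as a ℤ-module and contains a ℚ-basis of the algebra
(i.e. spans it over ℚ). -/
def IsOrder {a b : ℚ} (O : Subring ℍ[ℚ, a, b]) : Prop :=
  (∃ s : Finset ℍ[ℚ, a, b],
      (Submodule.span ℤ (s : Set ℍ[ℚ, a, b]) : Set ℍ[ℚ, a, b]) = (O : Set ℍ[ℚ, a, b])) ∧
    Submodule.span ℚ (O : Set ℍ[ℚ, a, b]) = ⊤

/-- A maximal order: an order maximal under inclusion. -/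
def IsMaximalOrder {a b : ℚ} (O : Subring ℍ[ℚ, a, b]) : Prop :=
  IsOrder O ∧ ∀ O' : Subring ℍ[ℚ, a, b], IsOrder O' → O ≤ O' → O' = O

/-- Two orders are conjugate (of the same type) if `O' = γ⁻¹·O·γ` for some
invertible (equivalently, of nonzero reduced norm) `γ` in the algebra. -/
def AreConjugate {a b : ℚ} (O O' : Subring ℍ[ℚ, a, b]) : Prop :=
  ∃ γ : ℍ[ℚ, a, b]ˣ,
    ∀ x, x ∈ O' ↔ ∃ y ∈ O, x = (↑γ⁻¹ : ℍ[ℚ, a, b]) * y * (↑γ : ℍ[ℚ, a, b])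

/-- A left `O`-ideal: a ℤ-submodule of the algebra, finitely generated as a ℤ-module,
containing a ℚ-basis of the algebra, and stable under left multiplication by `O`. -/
def IsLeftIdeal {a b : ℚ} (O : Subring ℍ[ℚ, a, b]) (I : Submodule ℤ ℍ[ℚ, a, b]) : Prop :=
  I.FG ∧ Submodule.span ℚ (I : Set ℍ[ℚ, a, b]) = ⊤ ∧ ∀ o ∈ O, ∀ x ∈ I, o * x ∈ I

/-- Equivalence of left ideals: `I = J·γ` for some nonzero `γ`. -/
def IdealEquiv {a b : ℚ} (I J : Submodule ℤ ℍ[ℚ, a, b]) : Prop :=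
  ∃ γ : ℍ[ℚ, a, b], γ ≠ 0 ∧ (I : Set ℍ[ℚ, a, b]) = (fun y => y * γ) '' (J : Set ℍ[ℚ, a, b])

/-!
The map sending a left `O`-ideal `I` to its right order `Oᵣ(I) = {x | I x ⊆ I}` descends to ideal
classes: if `I = J γ`, then `γ` is invertible (the right multiples `J γ` span `A`), and
`Oᵣ(I) = γ⁻¹ Oᵣ(J) γ`. It hits every type: for a maximal order `O'`, the product `O O'` is a left
`O`-ideal whose right order contains `O'`, hence equals `O'` by maximality.
-/

section Ring

variable {A : Type*} [Ring A]

def Subring.toIntSubmodule (O : Subring A) : Submodule ℤ A :=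
  Subalgebra.toSubmodule (subalgebraOfSubring O)

@[simp]
theorem Subring.mem_toIntSubmodule {O : Subring A} {x : A} : x ∈ O.toIntSubmodule ↔ x ∈ O :=
  Iff.rfl

theorem Subring.toIntSubmodule_mul_self_le (O : Subring A) :
    O.toIntSubmodule * O.toIntSubmodule ≤ O.toIntSubmodule := by
  have := Subalgebra.mul_toSubmodule_le (subalgebraOfSubring O) (subalgebraOfSubring O)
  rwa [sup_idem] at this

theorem Subring.map_symm_map {B : Type*} [Ring B] (e : A ≃+* B) (O : Subring A) :
    (O.map (e : A →+* B)).map (e.symm : B →+* A) = O := by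
  ext x
  simp

def rightOrder (I : Submodule ℤ A) : Subring A where
  carrier := {x | ∀ y ∈ I, y * x ∈ I}
  one_mem' y hy := by simpa using hy
  mul_mem' hx hz y hy := by rw [← mul_assoc]; exact hz _ (hx _ hy)
  add_mem' hx hz y hy := by rw [mul_add]; exact I.add_mem (hx _ hy) (hz _ hy)
  zero_mem' y _ := by rw [mul_zero]; exact I.zero_mem
  neg_mem' hx y hy := by rw [mul_neg]; exact I.neg_mem (hx _ hy)

theorem mem_rightOrder {I : Submodule ℤ A} {x : A} : x ∈ rightOrder I ↔ ∀ y ∈ I, y * x ∈ I :=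
  Iff.rfl

theorem toIntSubmodule_rightOrder_le {I : Submodule ℤ A} (h : (1 : A) ∈ I) :
    (rightOrder I).toIntSubmodule ≤ I := fun x hx => by
  simpa using (Subring.mem_toIntSubmodule.mp hx) 1 h

theorem le_rightOrder_iff {I : Submodule ℤ A} {O : Subring A} :
    O ≤ rightOrder I ↔ I * O.toIntSubmodule ≤ I := by
  rw [Submodule.mul_le]
  exact ⟨fun h y hy x hx => h hx y hy, fun h x hx y hy => h y hy x hx⟩

theorem mem_rightOrder_iff_of_eq_image_mul {I J : Submodule ℤ A} {u : Aˣ}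
    (h : (I : Set A) = (fun y => y * (u : A)) '' J) {x : A} :
    x ∈ rightOrder I ↔ ↑u * x * ↑u⁻¹ ∈ rightOrder J := by
  have hmem : ∀ z, z ∈ I ↔ z * ↑u⁻¹ ∈ J := fun z => by
    rw [← SetLike.mem_coe, h]
    exact ⟨by rintro ⟨j, hj, rfl⟩; simpa, fun hz => ⟨_, hz, by simp⟩⟩
  simp only [mem_rightOrder, hmem]
  constructor
  · intro hx j hj
    simpa [mul_assoc] using hx (j * ↑u) (by simpa)
  · intro hx y hy
    simpa [mul_assoc] using hx _ hy

end Ring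

theorem isUnit_of_span_image_mul_right_eq_top {K A : Type*} [Field K] [Ring A] [Algebra K A]
    [FiniteDimensional K A] {γ : A} {S : Set A}
    (h : Submodule.span K ((· * γ) '' S) = ⊤) : IsUnit γ := by
  have : IsArtinianRing A := IsArtinianRing.of_finite K A
  have hsurj : LinearMap.range (LinearMap.mulRight K γ) = ⊤ := by
    refine eq_top_iff.mpr (h ▸ Submodule.span_le.mpr ?_)
    rintro _ ⟨x, -, rfl⟩
    exact ⟨x, rfl⟩
  obtain ⟨x, hx⟩ := LinearMap.range_eq_top.mp hsurj 1
  exact .of_mul_eq_one_right x hx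

section Quaternion

variable {a b : ℚ}

theorem isOrder_iff {O : Subring ℍ[ℚ, a, b]} :
    IsOrder O ↔ O.toIntSubmodule.FG ∧ Submodule.span ℚ (O : Set ℍ[ℚ, a, b]) = ⊤ :=
  and_congr_left' <| exists_congr fun _ => SetLike.coe_set_eq (q := O.toIntSubmodule)

theorem IsOrder.map {O : Subring ℍ[ℚ, a, b]} (h : IsOrder O) (e : ℍ[ℚ, a, b] ≃+* ℍ[ℚ, a, b]) :
    IsOrder (O.map (e : ℍ[ℚ, a, b] →+* ℍ[ℚ, a, b])) := by
  obtain ⟨hfg, hspan⟩ := isOrder_iff.mp h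
  refine isOrder_iff.mpr ⟨?_, ?_⟩
  · have : (O.map (e : ℍ[ℚ, a, b] →+* ℍ[ℚ, a, b])).toIntSubmodule =
        O.toIntSubmodule.map e.toAddMonoidHom.toIntLinearMap :=
      SetLike.coe_injective (Subring.coe_map _ _)
    exact this ▸ hfg.map _
  · rw [Subring.coe_map,
      show ⇑(e : ℍ[ℚ, a, b] →+* ℍ[ℚ, a, b]) = e.toAddMonoidHom.toRatLinearMap from rfl,
      Submodule.span_image, hspan, Submodule.map_top, LinearMap.range_eq_top]
    exact e.surjective

theorem IsMaximalOrder.map {O : Subring ℍ[ℚ, a, b]} (h : IsMaximalOrder O)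
    (e : ℍ[ℚ, a, b] ≃+* ℍ[ℚ, a, b]) : IsMaximalOrder (O.map (e : ℍ[ℚ, a, b] →+* ℍ[ℚ, a, b])) := by
  refine ⟨h.1.map e, fun O' hO' hle => ?_⟩
  have : O'.map (e.symm : ℍ[ℚ, a, b] →+* ℍ[ℚ, a, b]) = O :=
    h.2 _ (hO'.map e.symm) (Subring.map_symm_map e O ▸ (Subring.gc_map_comap _).monotone_l hle)
  rw [← this]
  exact (Subring.map_symm_map e.symm O').symm

theorem isMaximalOrder_map_iff {O : Subring ℍ[ℚ, a, b]} (e : ℍ[ℚ, a, b] ≃+* ℍ[ℚ, a, b]) :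
    IsMaximalOrder (O.map (e : ℍ[ℚ, a, b] →+* ℍ[ℚ, a, b])) ↔ IsMaximalOrder O :=
  ⟨fun h => Subring.map_symm_map e O ▸ h.map e.symm, fun h => h.map e⟩

theorem IsOrder.of_le_rightOrder {I : Submodule ℤ ℍ[ℚ, a, b]} (hfg : I.FG) (h1 : 1 ∈ I)
    {O : Subring ℍ[ℚ, a, b]} (hO : IsOrder O) (hle : O ≤ rightOrder I) :
    IsOrder (rightOrder I) :=
  isOrder_iff.mpr ⟨hfg.of_le (toIntSubmodule_rightOrder_le h1),
    eq_top_iff.mpr (hO.2 ▸ Submodule.span_mono hle)⟩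

theorem areConjugate_of_forall_mem_iff {O O' : Subring ℍ[ℚ, a, b]} (γ : ℍ[ℚ, a, b]ˣ)
    (h : ∀ x, x ∈ O' ↔ ↑γ * x * ↑γ⁻¹ ∈ O) : AreConjugate O O' :=
  ⟨γ, fun x => (h x).trans
    ⟨fun hx => ⟨_, hx, by simp [mul_assoc]⟩, by rintro ⟨y, hy, rfl⟩; simpa [mul_assoc]⟩⟩

theorem AreConjugate.isMaximalOrder_iff {O O' : Subring ℍ[ℚ, a, b]} (h : AreConjugate O O') :
    IsMaximalOrder O ↔ IsMaximalOrder O' := by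
  obtain ⟨γ, hγ⟩ := h
  have : O' = O.map (MulSemiringAction.toRingEquiv _ ℍ[ℚ, a, b] (ConjAct.toConjAct γ⁻¹) :
      ℍ[ℚ, a, b] →+* ℍ[ℚ, a, b]) := by
    ext x
    simp [hγ, Subring.mem_map, ConjAct.units_smul_def, eq_comm]
  rw [this, isMaximalOrder_map_iff]

theorem IdealEquiv.areConjugate_rightOrder {I J : Submodule ℤ ℍ[ℚ, a, b]}
    (hI : Submodule.span ℚ (I : Set ℍ[ℚ, a, b]) = ⊤) (h : IdealEquiv I J) :
    AreConjugate (rightOrder J) (rightOrder I) := by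
  obtain ⟨γ, -, hIJ⟩ := h
  obtain ⟨u, rfl⟩ := isUnit_of_span_image_mul_right_eq_top (hIJ ▸ hI)
  exact areConjugate_of_forall_mem_iff u fun _ => mem_rightOrder_iff_of_eq_image_mul hIJ

theorem exists_isLeftIdeal_rightOrder_eq {O O' : Subring ℍ[ℚ, a, b]} (hO : IsOrder O)
    (hO' : IsMaximalOrder O') : ∃ I, IsLeftIdeal O I ∧ rightOrder I = O' := by
  set I := O.toIntSubmodule * O'.toIntSubmodule
  have hO'I : O'.toIntSubmodule ≤ I := by
    have h1 : 1 ≤ O.toIntSubmodule := Submodule.one_le.mpr O.one_mem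
    simpa using mul_le_mul' h1 le_rfl
  have hfg : I.FG := (isOrder_iff.mp hO).1.mul (isOrder_iff.mp hO'.1).1
  have hle : O' ≤ rightOrder I := le_rightOrder_iff.mpr <| by
    rw [mul_assoc]; exact mul_le_mul' le_rfl O'.toIntSubmodule_mul_self_le
  refine ⟨I, ⟨hfg, eq_top_iff.mpr (hO'.1.2 ▸ Submodule.span_mono hO'I), fun o ho x hx => ?_⟩,
    hO'.2 _ (hO'.1.of_le_rightOrder hfg (hO'I O'.one_mem) hle) hle⟩
  have := Submodule.mul_mem_mul (Subring.mem_toIntSubmodule.mpr ho) hx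
  rw [← mul_assoc] at this
  exact mul_le_mul' O.toIntSubmodule_mul_self_le le_rfl this

abbrev MaximalOrderType (a b : ℚ) : Type :=
  Quot fun O₁ O₂ : {O : Subring ℍ[ℚ, a, b] // IsMaximalOrder O} => AreConjugate O₁.1 O₂.1

open Classical in
/-- Right orders of left ideals of a maximal order are maximal; the fallback `O₀` spares us
proving this. -/
noncomputable def rightOrderType (O₀ : {O : Subring ℍ[ℚ, a, b] // IsMaximalOrder O})
    (I : Submodule ℤ ℍ[ℚ, a, b]) : MaximalOrderType a b :=
  if h : IsMaximalOrder (rightOrder I) then Quot.mk _ ⟨rightOrder I, h⟩ else Quot.mk _ O₀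

theorem rightOrderType_of_rightOrder_eq (O₀ : {O : Subring ℍ[ℚ, a, b] // IsMaximalOrder O})
    {I : Submodule ℤ ℍ[ℚ, a, b]} {O' : {O : Subring ℍ[ℚ, a, b] // IsMaximalOrder O}}
    (h : rightOrder I = O'.1) : rightOrderType O₀ I = Quot.mk _ O' := by
  obtain ⟨O', hO'⟩ := O'
  subst h
  exact dif_pos hO'

theorem rightOrderType_eq_of_idealEquiv (O₀ : {O : Subring ℍ[ℚ, a, b] // IsMaximalOrder O})
    {I J : Submodule ℤ ℍ[ℚ, a, b]} (hI : Submodule.span ℚ (I : Set ℍ[ℚ, a, b]) = ⊤)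
    (h : IdealEquiv I J) : rightOrderType O₀ I = rightOrderType O₀ J := by
  have hc := h.areConjugate_rightOrder hI
  by_cases hJ : IsMaximalOrder (rightOrder J)
  · rw [rightOrderType_of_rightOrder_eq O₀ (O' := ⟨_, hc.isMaximalOrder_iff.mp hJ⟩) rfl,
      rightOrderType_of_rightOrder_eq O₀ (O' := ⟨_, hJ⟩) rfl]
    symm
    exact Quot.sound hc
  · rw [rightOrderType, rightOrderType, dif_neg hJ, dif_neg (mt hc.isMaximalOrder_iff.mpr hJ)]

end Quaternion

theorem type_number_le_class_number_general (a b : ℚ)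
    (O : Subring ℍ[ℚ, a, b]) (hO : IsMaximalOrder O) :
    Cardinal.mk (Quot fun O₁ O₂ : {O' : Subring ℍ[ℚ, a, b] // IsMaximalOrder O'} =>
        AreConjugate O₁.1 O₂.1)
      ≤ Cardinal.mk (Quot fun I J : {I : Submodule ℤ ℍ[ℚ, a, b] // IsLeftIdeal O I} =>
        IdealEquiv I.1 J.1) := by
  refine Cardinal.mk_le_of_surjective (f := Quot.lift (fun I => rightOrderType ⟨O, hO⟩ I.1)
    fun I _ h => rightOrderType_eq_of_idealEquiv _ I.2.2.1 h) ?_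
  rintro ⟨O', hO'⟩
  obtain ⟨I, hI, hIO'⟩ := exists_isLeftIdeal_rightOrder_eq hO.1 hO'
  exact ⟨Quot.mk _ ⟨I, hI⟩, rightOrderType_of_rightOrder_eq _ hIO'⟩

/-- **Brandt: `t(A) ≤ h(O)`.** The number of conjugacy classes of maximal orders of
`A = ℍ[ℚ, a, b]` is at most the number of classes of left ideals of any maximal
order `O` of `A`, as an inequality of cardinalities. -/
theorem type_number_le_class_number (a b : ℚ) (ha : a ≠ 0) (hb : b ≠ 0)
    (O : Subring ℍ[ℚ, a, b]) (hO : IsMaximalOrder O) :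
    Cardinal.mk (Quot fun O₁ O₂ : {O' : Subring ℍ[ℚ, a, b] // IsMaximalOrder O'} =>
        AreConjugate O₁.1 O₂.1)
      ≤ Cardinal.mk (Quot fun I J : {I : Submodule ℤ ℍ[ℚ, a, b] // IsLeftIdeal O I} =>
        IdealEquiv I.1 J.1) :=
  type_number_le_class_number_general a b O hO
end

section
/- (Fundamental inequality of Mahler–Weyl/Minkowski type) Let f = Σ_{1≤i≤j≤3} a_ij X_i X_j be a positive definite integral ternary quadratic form that is reduced. Then a₁₁ · a₂₂ · a₃₃ ≤ 2 · det G_f, where G_f is the Gram matrix of f. -/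
/-- An integral ternary quadratic form `f = Σ_{1 ≤ i ≤ j ≤ 3} aᵢⱼ Xᵢ Xⱼ`,
recorded by its six coefficients. -/
structure TQF where
  a11 : ℤ
  a22 : ℤ
  a33 : ℤ
  a12 : ℤ
  a13 : ℤ
  a23 : ℤ

namespace TQF

/-- The value of the form at `x ∈ ℤ³`. -/
def eval (f : TQF) (x : Fin 3 → ℤ) : ℤ :=
  f.a11 * x 0 ^ 2 + f.a22 * x 1 ^ 2 + f.a33 * x 2 ^ 2
    + f.a12 * x 0 * x 1 + f.a13 * x 0 * x 2 + f.a23 * x 1 * x 2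

/-- Positive definiteness: `f(x) > 0` for every nonzero `x ∈ ℤ³`. -/
def PosDef (f : TQF) : Prop := ∀ x : Fin 3 → ℤ, x ≠ 0 → 0 < f.eval x

/-- The (rational, symmetric) Gram matrix of `f`. -/
def gram (f : TQF) : Matrix (Fin 3) (Fin 3) ℚ :=
  !![(f.a11 : ℚ), (f.a12 : ℚ) / 2, (f.a13 : ℚ) / 2;
     (f.a12 : ℚ) / 2, (f.a22 : ℚ), (f.a23 : ℚ) / 2;
     (f.a13 : ℚ) / 2, (f.a23 : ℚ) / 2, (f.a33 : ℚ)]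

/-- Integral equivalence of ternary forms: `f(Tx) = g(x)` for some `T ∈ GL₃(ℤ)`. -/
def EquivForm (f g : TQF) : Prop :=
  ∃ T : Matrix (Fin 3) (Fin 3) ℤ, IsUnit T.det ∧ ∀ x : Fin 3 → ℤ, f.eval (T.mulVec x) = g.eval x

/-- `f` represents a value `≤ t` by `k` linearly independent vectors of `ℤ³`. -/
def MinBound (f : TQF) (k : ℕ) (t : ℤ) : Prop :=
  ∃ v : Fin k → (Fin 3 → ℤ), LinearIndependent ℤ v ∧ ∀ i, f.eval (v i) ≤ t

/-- `t` is the `k`-th successive minimum of `f`: the least integer `t` such that there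
are `k` linearly independent vectors `x ∈ ℤ³` with `f(x) ≤ t`. -/
def IsSuccMin (f : TQF) (k : ℕ) (t : ℤ) : Prop :=
  f.MinBound k t ∧ ∀ t' : ℤ, f.MinBound k t' → t ≤ t'

/-- The representation number `r(f, ℓ) = #{x ∈ ℤ³ : f(x) = ℓ}`. -/
noncomputable def repNumber (f : TQF) (ℓ : ℤ) : ℕ :=
  {x : Fin 3 → ℤ | f.eval x = ℓ}.ncard

/-- `f` is reduced (Eichler/Seeber reduction conditions). -/
def Reduced (f : TQF) : Prop :=
  (∀ x : Fin 3 → ℤ, Int.gcd (x 0) (Int.gcd (x 1) (x 2)) = 1 → f.a11 ≤ f.eval x) ∧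
  (∀ x : Fin 3 → ℤ, Int.gcd (x 1) (x 2) = 1 → f.a22 ≤ f.eval x) ∧
  (∀ x : Fin 3 → ℤ, (x 2).natAbs = 1 → f.a33 ≤ f.eval x) ∧
  0 ≤ f.a12 ∧ 0 ≤ f.a13 ∧ ((f.a12 = 0 ∨ f.a13 = 0) → 0 ≤ f.a23) ∧
  (f.a11 = f.a22 → |f.a23| ≤ f.a13) ∧
  (f.a22 = f.a33 → f.a13 ≤ f.a12)

end TQF





lemma key_neg (a b c u s t : ℤ) (ha : 0 < a) (hab : a ≤ b) (hbc : b ≤ c)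
    (ht0 : 0 ≤ t) (hta : t ≤ a) (hs0 : 0 ≤ s) (hsa : s ≤ a)
    (hu0 : 0 ≤ u) (hub : u ≤ b) (hukey : u ≤ a + b - s - t) :
    a*u^2 + b*s^2 + c*t^2 + u*s*t ≤ 2*(a*b*c) := by
  rcases le_or_gt (s + t) a with hst | hst
  · have h1 : (0:ℤ) ≤ a*u*(b-u) := mul_nonneg (mul_nonneg ha.le hu0) (by linarith)
    have h2 : (0:ℤ) ≤ (b-u)*(a*b+s*t) := mul_nonneg (by linarith) (by nlinarith [mul_nonneg hs0 ht0])
    have h3 : (0:ℤ) ≤ a*b*(c-b) := mul_nonneg (mul_nonneg ha.le (by linarith)) (by linarith)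
    have h4 : (0:ℤ) ≤ a*c*(b-a) := mul_nonneg (mul_nonneg ha.le (by linarith)) (by linarith)
    have h5 : (0:ℤ) ≤ c*((a-s-t)*(a+s+t)) := mul_nonneg (by linarith) (mul_nonneg (by linarith) (by linarith))
    have h6 : (0:ℤ) ≤ (c-b)*(s*s) := mul_nonneg (by linarith) (mul_nonneg hs0 hs0)
    have h7 : (0:ℤ) ≤ c*(s*t) := mul_nonneg (by linarith) (mul_nonneg hs0 ht0)
    have h8 : (0:ℤ) ≤ (c-b)*(s*t) := mul_nonneg (by linarith) (mul_nonneg hs0 ht0)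
    nlinarith [h1, h2, h3, h4, h5, h6, h7, h8]
  · have hp0 : 0 ≤ s + t - a := by linarith
    have hpa : s + t - a ≤ a := by linarith
    have h1 : (0:ℤ) ≤ a*u*((b-(s+t-a))-u) := mul_nonneg (mul_nonneg ha.le hu0) (by linarith)
    have h2 : (0:ℤ) ≤ ((b-(s+t-a))-u)*(a*(b-(s+t-a))+s*t) :=
      mul_nonneg (by linarith) (by nlinarith [mul_nonneg hs0 ht0, mul_nonneg ha.le (by linarith : (0:ℤ) ≤ b-(s+t-a))])
    have h3 : (0:ℤ) ≤ (c-b)*(2*a*b-t*t) :=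
      mul_nonneg (by linarith) (by nlinarith [mul_nonneg (by linarith : (0:ℤ) ≤ a-t) (by linarith : (0:ℤ) ≤ a+t), mul_nonneg ha.le (by linarith : (0:ℤ) ≤ b-a)])
    have h4 : (0:ℤ) ≤ (b+(s+t-a))*((a-s)*(a-t)) :=
      mul_nonneg (by linarith) (mul_nonneg (by linarith) (by linarith))
    have h5 : (0:ℤ) ≤ b*(s+t-a)*(a-(s+t-a)) := mul_nonneg (mul_nonneg (by linarith) hp0) (by linarith)
    have h6 : (0:ℤ) ≤ a*b*(b-a) := mul_nonneg (mul_nonneg ha.le (by linarith)) (by linarith)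
    nlinarith [h1, h2, h3, h4, h5, h6]

lemma key_ineq (a b c r s t : ℤ) (ha : 0 < a) (hab : a ≤ b) (hbc : b ≤ c)
    (ht0 : 0 ≤ t) (hta : t ≤ a) (hs0 : 0 ≤ s) (hsa : s ≤ a)
    (hrb : r ≤ b) (hrb' : -b ≤ r) (hkey : s + t - a - b ≤ r) :
    a*r^2 + b*s^2 + c*t^2 ≤ 2*(a*b*c) + r*s*t := by
  rcases le_or_gt 0 r with hr | hr
  · -- r ≥ 0 : multilinear vertex certificate for G = 2abc + rst - abr - abs - act
    have hb : (0:ℤ) < b := lt_of_lt_of_le ha hab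
    have hc : (0:ℤ) < c := lt_of_lt_of_le hb hbc
    have v1 : (0:ℤ) ≤ a*b*(2*c-b) := mul_nonneg (mul_nonneg ha.le hb.le) (by linarith)
    have v2 : (0:ℤ) ≤ a*b*(2*c-a) := mul_nonneg (mul_nonneg ha.le hb.le) (by linarith)
    have v3 : (0:ℤ) ≤ a*c*(2*b-a) := mul_nonneg (mul_nonneg ha.le hc.le) (by linarith)
    have v4 : (0:ℤ) ≤ a*b*(2*c-a-b) := mul_nonneg (mul_nonneg ha.le hb.le) (by linarith)
    have v5 : (0:ℤ) ≤ a*(2*b*c-b*b-a*c) := mul_nonneg ha.le (by nlinarith [mul_nonneg hb.le (by linarith : (0:ℤ) ≤ c-b), mul_nonneg hc.le (by linarith : (0:ℤ) ≤ b-a)])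
    have v6 : (0:ℤ) ≤ a*(2*b*c-a*b-a*c) := mul_nonneg ha.le (by nlinarith [mul_nonneg hb.le (by linarith : (0:ℤ) ≤ c-a), mul_nonneg hc.le (by linarith : (0:ℤ) ≤ b-a)])
    have hG : 0 ≤ 2*a*b*c + r*s*t - a*b*r - a*b*s - a*c*t := by
      nlinarith [mul_pos (mul_pos ha ha) (lt_of_lt_of_le ha hab),
        mul_nonneg (mul_nonneg (mul_nonneg (mul_nonneg (mul_nonneg (by linarith : (0:ℤ) ≤ 2*a) (by linarith : (0:ℤ) ≤ b)) (by linarith : (0:ℤ) ≤ c)) (by linarith : 0 ≤ b - r)) (by linarith : 0 ≤ a - s)) (by linarith : 0 ≤ a - t),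
        mul_nonneg (mul_nonneg (mul_nonneg v1 hr) (by linarith : 0 ≤ a - s)) (by linarith : 0 ≤ a - t),
        mul_nonneg (mul_nonneg (mul_nonneg v2 (by linarith : 0 ≤ b - r)) hs0) (by linarith : 0 ≤ a - t),
        mul_nonneg (mul_nonneg (mul_nonneg v3 (by linarith : 0 ≤ b - r)) (by linarith : 0 ≤ a - s)) ht0,
        mul_nonneg (mul_nonneg (mul_nonneg v4 hr) hs0) (by linarith : 0 ≤ a - t),
        mul_nonneg (mul_nonneg (mul_nonneg v5 hr) (by linarith : 0 ≤ a - s)) ht0,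
        mul_nonneg (mul_nonneg (mul_nonneg v6 (by linarith : 0 ≤ b - r)) hs0) ht0,
        mul_nonneg (mul_nonneg (mul_nonneg v5 hr) hs0) ht0]
    nlinarith [mul_nonneg (mul_nonneg ha.le hr) (by linarith : 0 ≤ b - r),
      mul_nonneg (mul_nonneg (by linarith : (0:ℤ) ≤ b) hs0) (by linarith : 0 ≤ a - s),
      mul_nonneg (mul_nonneg (by linarith : (0:ℤ) ≤ c) ht0) (by linarith : 0 ≤ a - t)]
  · have h := key_neg a b c (-r) s t ha hab hbc ht0 hta hs0 hsa (by omega) (by omega) (by omega)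
    nlinarith [h]

/-- **Fundamental inequality of Mahler–Weyl/Minkowski type.** For a reduced positive
definite integral ternary quadratic form `f`, one has `a₁₁·a₂₂·a₃₃ ≤ 2·det G_f`. -/
theorem fundamental_inequality (f : TQF) (hf : f.PosDef) (hred : f.Reduced) :
    ((f.a11 * f.a22 * f.a33 : ℤ) : ℚ) ≤ 2 * f.gram.det := by
  obtain ⟨h11, h22, h33, ht0, hs0, hr0, _, _⟩ := hred
  have ha : 0 < f.a11 := by
    have := hf ![1,0,0] (by intro h; have := congrFun h 0; simp at this)
    simpa [TQF.eval] using this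
  have hab : f.a11 ≤ f.a22 := by
    have := h11 ![0,1,0] (by decide)
    simpa [TQF.eval] using this
  have hbc : f.a22 ≤ f.a33 := by
    have := h22 ![0,0,1] (by decide)
    simpa [TQF.eval] using this
  have hta : f.a12 ≤ f.a11 := by
    have := h22 ![-1,1,0] (by decide)
    simp [TQF.eval] at this; linarith
  have hsa : f.a13 ≤ f.a11 := by
    have := h33 ![-1,0,1] (by decide)
    simp [TQF.eval] at this; linarith
  have hrb : f.a23 ≤ f.a22 := by
    have := h33 ![0,-1,1] (by decide)
    simp [TQF.eval] at this; linarith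
  have hrb' : -f.a22 ≤ f.a23 := by
    have := h33 ![0,1,1] (by decide)
    simp [TQF.eval] at this; linarith
  have hkey : f.a13 + f.a12 - f.a11 - f.a22 ≤ f.a23 := by
    have := h33 ![1,-1,-1] (by decide)
    simp [TQF.eval] at this; linarith
  have key := key_ineq f.a11 f.a22 f.a33 f.a23 f.a13 f.a12 ha hab hbc ht0 hta hs0 hsa hrb hrb' hkey
  have hdet : f.gram.det = (f.a11*f.a22*f.a33 : ℚ) + (f.a23*f.a13*f.a12)/4
      - (f.a11*(f.a23:ℚ)^2 + f.a22*(f.a13:ℚ)^2 + f.a33*(f.a12:ℚ)^2)/4 := by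
    simp [TQF.gram, Matrix.det_fin_three]
    ring
  rw [hdet]
  have keyQ : (f.a11*(f.a23:ℚ)^2 + f.a22*(f.a13:ℚ)^2 + f.a33*(f.a12:ℚ)^2)
      ≤ 2*((f.a11:ℚ)*f.a22*f.a33) + f.a23*f.a13*f.a12 := by exact_mod_cast key
  push_cast
  linarith
end

section
/- (The Schiemann bound is O of the discriminant) Let f = Σ_{1≤i≤j≤3} a_ij X_i X_j be a positive definite integral ternary quadratic form that is reduced. Then min{ −a₁₁/14 + 18a₂₂/7 + a₃₃, 3a₁₁/2 − 5a₂₂/6 + 17a₃₃/6, 13a₁₁/5 + a₂₂ + a₃₃, 7a₃₃/2 } ≤ 7 · det G_f. (For reduced forms the successive minima are a₁₁ ≤ a₂₂ ≤ a₃₃, so this shows the bound b(f) in Schiemann's theorem grows at most linearly in the discriminant; in particular for forms of discriminant −p the bound is O(p).) -/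
/-!
Only the last entry `7a₃₃/2` of the minimum is needed. Testing the reduction conditions at
`(0,1,0)`, `(0,0,1)`, `(-1,1,0)`, `(-1,0,1)`, `(0,±1,1)` and `(-1,1,1)` gives
`a₁₁ ≤ a₂₂ ≤ a₃₃`, `a₁₂, a₁₃ ≤ a₁₁`, `|a₂₃| ≤ a₂₂` and `a₁₂ + a₁₃ - a₂₃ ≤ a₁₁ + a₂₂`. Under
these bounds the off-diagonal terms of
`4 det G_f = 4a₁₁a₂₂a₃₃ + a₁₂a₁₃a₂₃ - a₁₁a₂₃² - a₂₂a₁₃² - a₃₃a₁₂²` cost at most half of the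
diagonal term, so `det G_f ≥ a₁₁a₂₂a₃₃/2 ≥ a₃₃/2`.
-/

theorem mul_sq_add_mul_sq_add_mul_sq_le {R : Type*} [CommRing R] [LinearOrder R]
    [IsStrictOrderedRing R] {p q r u v w : R} (hp : 0 ≤ p) (hpq : p ≤ q) (hqr : q ≤ r)
    (hu : 0 ≤ u) (hup : u ≤ p) (hv : 0 ≤ v) (hvp : v ≤ p) (hw : |w| ≤ q)
    (huvw : u + v - w ≤ p + q) :
    p * w ^ 2 + q * v ^ 2 + r * u ^ 2 ≤ 2 * p * q * r + u * v * w := by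
  obtain ⟨hqw, hwq⟩ := abs_le.mp hw
  have hqp : 0 ≤ q - p := sub_nonneg.mpr hpq
  have hrq : 0 ≤ r - q := sub_nonneg.mpr hqr
  have hpu : 0 ≤ p - u := sub_nonneg.mpr hup
  have hpv : 0 ≤ p - v := sub_nonneg.mpr hvp
  have hqw' : 0 ≤ q - w := sub_nonneg.mpr hwq
  have hwq' : 0 ≤ q + w := by linarith
  have hslack : 0 ≤ p + q + w - u - v := by linarith
  have hq : 0 ≤ q := hp.trans hpq
  have hr : 0 ≤ r := hq.trans hqr
  -- the defect `2pqr + uvw - (pw² + qv² + ru²)` is a nonnegative combination of these products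
  nlinarith [mul_nonneg (mul_nonneg hp hrq) hpu, mul_nonneg (mul_nonneg hpu hqw') hwq',
    mul_nonneg (mul_nonneg hu hqw') hslack, mul_nonneg (mul_nonneg hv hqp) hpv,
    mul_nonneg (mul_nonneg hp hv) hpv, mul_nonneg (mul_nonneg hp hr) hqp,
    mul_nonneg (mul_nonneg hu hrq) hpu, mul_nonneg (mul_nonneg hp hqw') hslack,
    mul_nonneg (mul_nonneg hp hq) hrq, mul_nonneg (mul_nonneg hu hpu) hwq',
    mul_nonneg (mul_nonneg hpu hpv) hwq']

namespace TQF

variable {f : TQF}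

theorem eval_vec (f : TQF) (x y z : ℤ) :
    f.eval ![x, y, z] = f.a11 * x ^ 2 + f.a22 * y ^ 2 + f.a33 * z ^ 2
      + f.a12 * x * y + f.a13 * x * z + f.a23 * y * z := by
  simp [eval]

theorem det_gram (f : TQF) :
    4 * f.gram.det = 4 * f.a11 * f.a22 * f.a33 + f.a12 * f.a13 * f.a23
      - f.a11 * f.a23 ^ 2 - f.a22 * f.a13 ^ 2 - f.a33 * f.a12 ^ 2 := by
  simp [gram, Matrix.det_fin_three]
  ring

theorem PosDef.a11_pos (hf : f.PosDef) : 0 < f.a11 := by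
  simpa [eval_vec] using hf ![1, 0, 0] (by simp)

namespace Reduced

variable (hred : f.Reduced)
include hred

theorem a11_le_a22 : f.a11 ≤ f.a22 := by
  simpa [eval_vec] using hred.1 ![0, 1, 0] (by simp)

theorem a22_le_a33 : f.a22 ≤ f.a33 := by
  simpa [eval_vec] using hred.2.1 ![0, 0, 1] (by simp)

theorem a12_le_a11 : f.a12 ≤ f.a11 := by
  have := hred.2.1 ![-1, 1, 0] (by simp)
  simp only [eval_vec] at this
  linarith

theorem a13_le_a11 : f.a13 ≤ f.a11 := by
  have := hred.2.2.1 ![-1, 0, 1] (by simp)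
  simp only [eval_vec] at this
  linarith

theorem abs_a23_le_a22 : |f.a23| ≤ f.a22 := by
  have hplus := hred.2.2.1 ![0, 1, 1] (by simp)
  have hminus := hred.2.2.1 ![0, -1, 1] (by simp)
  simp only [eval_vec] at hplus hminus
  exact abs_le.mpr ⟨by linarith, by linarith⟩

theorem a12_add_a13_sub_a23_le : f.a12 + f.a13 - f.a23 ≤ f.a11 + f.a22 := by
  have := hred.2.2.1 ![-1, 1, 1] (by simp)
  simp only [eval_vec] at this
  linarith

theorem mul_mul_le_two_mul_det_gram (ha11 : 0 ≤ f.a11) :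
    (f.a11 * f.a22 * f.a33 : ℚ) ≤ 2 * f.gram.det := by
  have key : (f.a11 * f.a23 ^ 2 + f.a22 * f.a13 ^ 2 + f.a33 * f.a12 ^ 2 : ℚ)
      ≤ 2 * f.a11 * f.a22 * f.a33 + f.a12 * f.a13 * f.a23 := by
    exact_mod_cast mul_sq_add_mul_sq_add_mul_sq_le ha11 hred.a11_le_a22 hred.a22_le_a33
      hred.2.2.2.1 hred.a12_le_a11 hred.2.2.2.2.1 hred.a13_le_a11 hred.abs_a23_le_a22
      hred.a12_add_a13_sub_a23_le
  linarith [f.det_gram]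

end Reduced

end TQF

/-- **The Schiemann bound is `O(det)`.** For a reduced positive definite integral ternary
quadratic form `f` (whose successive minima are `a₁₁ ≤ a₂₂ ≤ a₃₃`), the Schiemann bound
`min{−a₁₁/14 + 18a₂₂/7 + a₃₃, 3a₁₁/2 − 5a₂₂/6 + 17a₃₃/6, 13a₁₁/5 + a₂₂ + a₃₃, 7a₃₃/2}`
is at most `7·det G_f`. -/
theorem schiemann_bound_linear_in_disc (f : TQF) (hf : f.PosDef) (hred : f.Reduced) :
    min (min (-(f.a11 : ℚ) / 14 + 18 * (f.a22 : ℚ) / 7 + (f.a33 : ℚ))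
             (3 * (f.a11 : ℚ) / 2 - 5 * (f.a22 : ℚ) / 6 + 17 * (f.a33 : ℚ) / 6))
        (min (13 * (f.a11 : ℚ) / 5 + (f.a22 : ℚ) + (f.a33 : ℚ)) (7 * (f.a33 : ℚ) / 2))
      ≤ 7 * f.gram.det := by
  refine (min_le_right _ _).trans ((min_le_right _ _).trans ?_)
  have ha11 : 1 ≤ f.a11 := hf.a11_pos
  have ha22 : 1 ≤ f.a22 := ha11.trans hred.a11_le_a22
  have ha33 : 0 ≤ f.a33 := (zero_le_one.trans ha22).trans hred.a22_le_a33
  have hdet := hred.mul_mul_le_two_mul_det_gram (zero_le_one.trans ha11)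
  have h_a33_le : (f.a33 : ℚ) ≤ f.a11 * f.a22 * f.a33 := by
    have : f.a33 ≤ f.a11 * f.a22 * f.a33 :=
      le_mul_of_one_le_left ha33 (one_le_mul_of_one_le_of_one_le ha11 ha22)
    exact_mod_cast this
  linarith
end

section
/- (Existence of reduced representatives) Every positive definite integral ternary quadratic form is equivalent to a reduced positive definite integral ternary quadratic form. -/
namespace TQF

open Matrix

def polar (f : TQF) (u v : Fin 3 → ℤ) : ℤ := f.eval (u + v) - f.eval u - f.eval v

def transform (f : TQF) (T : Matrix (Fin 3) (Fin 3) ℤ) : TQF where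
  a11 := f.eval (Tᵀ 0)
  a22 := f.eval (Tᵀ 1)
  a33 := f.eval (Tᵀ 2)
  a12 := f.polar (Tᵀ 0) (Tᵀ 1)
  a13 := f.polar (Tᵀ 0) (Tᵀ 2)
  a23 := f.polar (Tᵀ 1) (Tᵀ 2)

theorem eval_transform (f : TQF) (T : Matrix (Fin 3) (Fin 3) ℤ) (x : Fin 3 → ℤ) :
    (f.transform T).eval x = f.eval (T *ᵥ x) := by
  simp only [transform, polar, eval, mulVec, dotProduct, Fin.sum_univ_three, transpose_apply,
    Pi.add_apply]
  ring

theorem EquivForm.refl (f : TQF) : f.EquivForm f :=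
  ⟨1, by simp, fun x => by rw [one_mulVec]⟩

theorem EquivForm.transform {f g : TQF} (h : f.EquivForm g) {T : Matrix (Fin 3) (Fin 3) ℤ}
    (hT : IsUnit T.det) : f.EquivForm (g.transform T) := by
  obtain ⟨S, hS, hSg⟩ := h
  refine ⟨S * T, by rw [det_mul]; exact hS.mul hT, fun x => ?_⟩
  rw [← mulVec_mulVec, hSg, eval_transform]

theorem PosDef.of_equivForm {f g : TQF} (hf : f.PosDef) (h : f.EquivForm g) : g.PosDef := by
  obtain ⟨T, hT, hTg⟩ := h
  intro x hx
  rw [← hTg]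
  refine hf _ fun hTx => hx ?_
  have := invertibleOfIsUnitDet T hT
  simpa [mulVec_mulVec] using congrArg (⅟T *ᵥ ·) hTx

theorem PosDef.coeff_bounds {g : TQF} (hg : g.PosDef) :
    0 < g.a11 ∧ 0 < g.a22 ∧ 0 < g.a33 ∧
      g.a12 < g.a11 + g.a22 ∧ g.a13 < g.a11 + g.a33 ∧ g.a23 < g.a22 + g.a33 := by
  have e (a b c : ℤ) (h : a ≠ 0 ∨ b ≠ 0 ∨ c ≠ 0) : 0 < g.eval ![a, b, c] :=
    hg _ fun h0 => by simp_all [funext_iff, Fin.forall_fin_succ]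
  have h1 := e 1 0 0 (by simp)
  have h2 := e 0 1 0 (by simp)
  have h3 := e 0 0 1 (by simp)
  have h12 := e 1 (-1) 0 (by simp)
  have h13 := e 1 0 (-1) (by simp)
  have h23 := e 0 1 (-1) (by simp)
  simp [eval] at h1 h2 h3 h12 h13 h23
  omega

theorem exists_isCoprime_mul_gcd (a b : ℤ) :
    ∃ a' b' : ℤ, IsCoprime a' b' ∧ a = a' * Int.gcd a b ∧ b = b' * Int.gcd a b := by
  rcases Nat.eq_zero_or_pos (Int.gcd a b) with h | h
  · obtain ⟨rfl, rfl⟩ := Int.gcd_eq_zero_iff.mp h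
    exact ⟨1, 0, isCoprime_one_left, by simp, by simp⟩
  · obtain ⟨a', b', hab, ha, hb⟩ := Int.exists_gcd_one h
    exact ⟨a', b', Int.isCoprime_iff_gcd_eq_one.mpr hab, ha, hb⟩

theorem exists_isUnit_det_col_zero_eq {v : Fin 3 → ℤ}
    (hv : Int.gcd (v 0) (Int.gcd (v 1) (v 2)) = 1) :
    ∃ T : Matrix (Fin 3) (Fin 3) ℤ, IsUnit T.det ∧ Tᵀ 0 = v := by
  obtain ⟨a, b, ⟨p, q, hpq⟩, ha, hb⟩ := exists_isCoprime_mul_gcd (v 1) (v 2)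
  set d : ℤ := (Int.gcd (v 1) (v 2) : ℤ)
  obtain ⟨α, β, hαβ⟩ := Int.isCoprime_iff_gcd_eq_one.mpr hv
  refine ⟨!![v 0, -β, 0; v 1, α * a, -q; v 2, α * b, p], ?_, ?_⟩
  · have hdet : (!![v 0, -β, 0; v 1, α * a, -q; v 2, α * b, p]).det = 1 := by
      rw [det_fin_three]
      simp
      linear_combination (α * v 0 + β * d) * hpq + β * p * ha + β * q * hb + hαβ
    exact hdet ▸ isUnit_one
  · ext i
    fin_cases i <;> rfl

/-- The off-diagonal coefficients are to be maximised; shifted by `aᵢᵢ + aⱼⱼ` they stay positive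
on positive definite forms, so that `Int.toNat` loses nothing there. -/
def key (f : TQF) : ℕ ×ₗ ℕ ×ₗ ℕ ×ₗ ℕ ×ₗ ℕ ×ₗ ℕ :=
  toLex (f.a11.toNat, toLex (f.a22.toNat, toLex (f.a33.toNat,
    toLex ((f.a11 + f.a22 - f.a12).toNat, toLex ((f.a11 + f.a33 - f.a13).toNat,
      (f.a22 + f.a33 - f.a23).toNat)))))

def KeyMinimal (g : TQF) : Prop :=
  ∀ T : Matrix (Fin 3) (Fin 3) ℤ, IsUnit T.det → ¬ (g.transform T).key < g.key

theorem exists_equivForm_keyMinimal (f : TQF) : ∃ g, f.EquivForm g ∧ g.KeyMinimal := by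
  obtain ⟨g, hfg, hmin⟩ := (InvImage.wf key wellFounded_lt).has_min {g | f.EquivForm g}
    ⟨f, EquivForm.refl f⟩
  exact ⟨g, hfg, fun T hT => hmin _ (EquivForm.transform hfg hT)⟩

theorem KeyMinimal.a11_le_eval {g : TQF} (hg : g.PosDef) (hmin : g.KeyMinimal)
    {x : Fin 3 → ℤ} (hx : Int.gcd (x 0) (Int.gcd (x 1) (x 2)) = 1) : g.a11 ≤ g.eval x := by
  obtain ⟨T, hT, hTx⟩ := exists_isUnit_det_col_zero_eq hx
  have h := hmin T hT
  have := hg.coeff_bounds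
  simp only [key, transform, hTx, Prod.Lex.toLex_lt_toLex] at h
  omega

theorem KeyMinimal.a22_le_eval {g : TQF} (hg : g.PosDef) (hmin : g.KeyMinimal)
    {x : Fin 3 → ℤ} (hx : Int.gcd (x 1) (x 2) = 1) : g.a22 ≤ g.eval x := by
  obtain ⟨p, q, hpq⟩ := Int.isCoprime_iff_gcd_eq_one.mpr hx
  set T : Matrix (Fin 3) (Fin 3) ℤ := !![1, x 0, 0; 0, x 1, -q; 0, x 2, p]
  have hT : T.det = 1 := by
    rw [det_fin_three]
    simp [T]
    linear_combination hpq
  have hT0 : g.eval (Tᵀ 0) = g.a11 := by simp [T, eval]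
  have hT1 : Tᵀ 1 = x := by ext i; fin_cases i <;> rfl
  have h := hmin T (hT ▸ isUnit_one)
  have := hg.coeff_bounds
  simp only [key, transform, hT0, hT1, Prod.Lex.toLex_lt_toLex, true_and] at h
  omega

theorem KeyMinimal.a33_le_eval {g : TQF} (hg : g.PosDef) (hmin : g.KeyMinimal)
    {x : Fin 3 → ℤ} (hx : (x 2).natAbs = 1) : g.a33 ≤ g.eval x := by
  set T : Matrix (Fin 3) (Fin 3) ℤ := !![1, 0, x 0; 0, 1, x 1; 0, 0, x 2]
  have hT : T.det = x 2 := by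
    rw [det_fin_three]
    simp [T]
  have hT0 : g.eval (Tᵀ 0) = g.a11 := by simp [T, eval]
  have hT1 : g.eval (Tᵀ 1) = g.a22 := by simp [T, eval]
  have hT2 : Tᵀ 2 = x := by ext i; fin_cases i <;> rfl
  have h := hmin T (by rw [hT]; exact Int.isUnit_iff_natAbs_eq.mpr hx)
  have := hg.coeff_bounds
  simp only [key, transform, hT0, hT1, hT2, Prod.Lex.toLex_lt_toLex, true_and] at h
  omega

/- For the sign and tie-breaking conditions, the signed permutation of the variables used for each
one keeps the diagonal and, were the condition to fail, would increase the first off-diagonal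
coefficient it changes. -/
theorem KeyMinimal.reduced {g : TQF} (hg : g.PosDef) (hmin : g.KeyMinimal) : g.Reduced := by
  have := hg.coeff_bounds
  refine ⟨fun _ => hmin.a11_le_eval hg, fun _ => hmin.a22_le_eval hg,
    fun _ => hmin.a33_le_eval hg, ?_, ?_, ?_, ?_, ?_⟩
  · have h := hmin !![-1, 0, 0; 0, 1, 0; 0, 0, 1] (by simp [det_fin_three])
    simp [key, transform, polar, eval, Prod.Lex.toLex_lt_toLex] at h
    omega
  · have h := hmin !![1, 0, 0; 0, 1, 0; 0, 0, -1] (by simp [det_fin_three])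
    simp [key, transform, polar, eval, Prod.Lex.toLex_lt_toLex] at h
    omega
  · rintro (h0 | h0)
    · have h := hmin !![1, 0, 0; 0, -1, 0; 0, 0, 1] (by simp [det_fin_three])
      simp [key, transform, polar, eval, Prod.Lex.toLex_lt_toLex] at h
      omega
    · have h := hmin !![1, 0, 0; 0, 1, 0; 0, 0, -1] (by simp [det_fin_three])
      simp [key, transform, polar, eval, Prod.Lex.toLex_lt_toLex] at h
      omega
  · intro h0
    have h := hmin !![0, 1, 0; 1, 0, 0; 0, 0, 1] (by simp [det_fin_three])
    have h' := hmin !![0, -1, 0; -1, 0, 0; 0, 0, 1] (by simp [det_fin_three])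
    simp [key, transform, polar, eval, Prod.Lex.toLex_lt_toLex] at h h'
    rw [abs_le]
    omega
  · intro h0
    have h := hmin !![1, 0, 0; 0, 0, 1; 0, 1, 0] (by simp [det_fin_three])
    simp [key, transform, polar, eval, Prod.Lex.toLex_lt_toLex] at h
    omega

end TQF

/-- **Existence of reduced representatives.** Every positive definite integral ternary
quadratic form is integrally equivalent to a reduced one. -/
theorem exists_reduced_representative (f : TQF) (hf : f.PosDef) :
    ∃ g : TQF, g.PosDef ∧ g.Reduced ∧ f.EquivForm g := by
  obtain ⟨g, hfg, hmin⟩ := TQF.exists_equivForm_keyMinimal f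
  have hg := hf.of_equivForm hfg
  exact ⟨g, hg, hmin.reduced hg, hfg⟩
end

section
/- Let Q be a positive definite quadratic form on the real vector space ℝ³ (Q(x) > 0 for all x ≠ 0). Then the even Clifford algebra C₀(Q) = CliffordAlgebra.even Q is a division ring (it is isomorphic to Hamilton's quaternions ℍ; this expresses that the quaternion algebra attached to a positive definite ternary form is ramified at the infinite place). -/
/-!
A positive definite real ternary form is isometric to the sum of three squares. For any
`c₁ c₂`, the form `⟨-c₁, -c₂, 1⟩` is `-Q'` with `Q' = ⟨c₁, c₂⟩ ⊥ ⟨-1⟩`, so its even Clifford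
algebra is `C₀(-Q') ≅ C₀(Q') ≅ C(⟨c₁, c₂⟩) ≅ ℍ[c₁, c₂]`. Taking `c₁ = c₂ = -1` identifies the
even Clifford algebra of the sum of three squares with Hamilton's quaternions, a division ring.
-/

open CliffordAlgebra QuadraticMap

namespace CliffordAlgebra

variable {R M₁ M₂ : Type*} [CommRing R] [AddCommGroup M₁] [AddCommGroup M₂]
  [Module R M₁] [Module R M₂] {Q₁ : QuadraticForm R M₁} {Q₂ : QuadraticForm R M₂}

theorem evenOdd_map_equivOfIsometry (e : Q₁.IsometryEquiv Q₂) (n : ZMod 2) :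
    (evenOdd Q₁ n).map (equivOfIsometry e).toAlgHom.toLinearMap = evenOdd Q₂ n := by
  have hι : (LinearMap.range (ι Q₁)).map (equivOfIsometry e).toAlgHom.toLinearMap
      = LinearMap.range (ι Q₂) := by
    have hsurj : LinearMap.range e.toIsometry.toLinearMap = ⊤ :=
      LinearMap.range_eq_top.mpr e.surjective
    rw [show (equivOfIsometry e).toAlgHom.toLinearMap = (map e.toIsometry).toLinearMap from rfl,
      ι_range_map_map, hsurj, Submodule.map_top]
  simp_rw [evenOdd, Submodule.map_iSup, Submodule.map_pow, hι]

theorem even_map_equivOfIsometry (e : Q₁.IsometryEquiv Q₂) :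
    (even Q₁).map (equivOfIsometry e).toAlgHom = even Q₂ :=
  Subalgebra.toSubmodule_injective <| by
    rw [Subalgebra.map_toSubmodule, even_toSubmodule, even_toSubmodule]
    exact evenOdd_map_equivOfIsometry e 0

noncomputable def evenEquivOfIsometry (e : Q₁.IsometryEquiv Q₂) : even Q₁ ≃ₐ[R] even Q₂ :=
  ((equivOfIsometry e).subalgebraMap (even Q₁)).trans
    (Subalgebra.equivOfEq _ _ (even_map_equivOfIsometry e))

end CliffordAlgebra

namespace CliffordAlgebraQuaternion

variable {R : Type*} [CommRing R]

def weightedSumSquaresIsometryEquivNegQ' (c₁ c₂ : R) :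
    (weightedSumSquares R ![-c₁, -c₂, 1]).IsometryEquiv (-EquivEven.Q' (Q c₁ c₂)) where
  toFun x := ((x 0, x 1), x 2)
  invFun p := ![p.1.1, p.1.2, p.2]
  map_add' _ _ := rfl
  map_smul' _ _ := rfl
  left_inv x := by ext i; fin_cases i <;> rfl
  right_inv _ := rfl
  map_app' x := by
    simp [weightedSumSquares_apply, Fin.sum_univ_three]
    ring

noncomputable def evenEquivOfWeightedSumSquares (c₁ c₂ : R) :
    even (weightedSumSquares R ![-c₁, -c₂, 1]) ≃ₐ[R] QuaternionAlgebra R c₁ 0 c₂ :=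
  (evenEquivOfIsometry (weightedSumSquaresIsometryEquivNegQ' c₁ c₂)).trans <|
    (evenEquivEvenNeg _).symm.trans <| (equivEven _).symm.trans CliffordAlgebraQuaternion.equiv

end CliffordAlgebraQuaternion

theorem QuadraticForm.PosDef.equivalent_sum_squares {M : Type*} [AddCommGroup M] [Module ℝ M]
    [FiniteDimensional ℝ M] {Q : QuadraticForm ℝ M} (hQ : Q.PosDef) {n : ℕ}
    (hn : Module.finrank ℝ M = n) : Equivalent Q (weightedSumSquares ℝ (1 : Fin n → ℝ)) := by
  subst hn
  obtain ⟨v, hv⟩ := LinearMap.BilinForm.exists_orthogonal_basis (associated_isSymm ℝ Q)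
  have hpos (i) : 0 < Q (v i) := hQ _ (v.ne_zero i)
  -- rescale the `i`-th basis vector by `1 / √(Q (v i))`
  refine ⟨(Q.isometryEquivWeightedSumSquares v hv).trans
    (QuadraticForm.isometryEquivWeightedSumSquaresWeightedSumSquares
      (fun i => Units.mk0 (√(Q (v i))) (Real.sqrt_pos.mpr (hpos i)).ne') fun i => ?_)⟩
  simp [Real.sq_sqrt (hpos i).le]

/-- **Ramification at the infinite place.** The even Clifford algebra of a positive
definite quadratic form on `ℝ³` is a division ring (it is isomorphic to Hamilton's
quaternions `ℍ`): it is a nontrivial ring in which every nonzero element is a unit. -/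
theorem even_clifford_posDef_isDivisionRing
    (Q : QuadraticForm ℝ (Fin 3 → ℝ)) (hQ : ∀ x : Fin 3 → ℝ, x ≠ 0 → 0 < Q x) :
    Nontrivial (CliffordAlgebra.even Q) ∧
      ∀ x : CliffordAlgebra.even Q, x ≠ 0 → IsUnit x := by
  obtain ⟨e⟩ := QuadraticForm.PosDef.equivalent_sum_squares hQ (Module.finrank_fin_fun ℝ)
  have hw : (1 : Fin 3 → ℝ) = ![-(-1), -(-1), 1] := by ext i; fin_cases i <;> simp
  let E : even Q ≃ₐ[ℝ] Quaternion ℝ :=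
    (evenEquivOfIsometry (e.trans (QuadraticForm.weightedSumSquaresCongr hw))).trans
      (CliffordAlgebraQuaternion.evenEquivOfWeightedSumSquares (-1) (-1))
  exact ⟨E.toEquiv.nontrivial, fun x hx =>
    (isUnit_map_iff E x).mp ((map_ne_zero_iff E E.injective).mpr hx).isUnit⟩
end

section
/- (Integrality of reduced traces and norms on orders) Let a, b be nonzero rationals, A = ℍ[ℚ, a, b], and O an order of A. Then for every α ∈ O, the reduced trace tr(α) = α + star α and the reduced norm nr(α) = normSq α are integers (i.e. the scalar tr(α) ∈ ℚ lies in ℤ and nr(α) ∈ ℚ lies in ℤ). -/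
open scoped Quaternion

/-- The reduced trace `tr(α)`, the scalar with `α + star α = tr(α)·1`. -/
def redTrace {a b : ℚ} (α : ℍ[ℚ, a, b]) : ℚ := 2 * α.re

/-- The reduced norm `nr(α)`, the scalar with `α * star α = nr(α)·1`. -/
def redNorm {a b : ℚ} (α : ℍ[ℚ, a, b]) : ℚ := (α * star α).re

/-!
An element of an order lies in a finitely generated ℤ-module closed under multiplication, so it
is integral over ℤ. So is its conjugate, conjugation being a ring anti-automorphism, and the two
commute; hence `tr α = α + star α` and `nr α = α * star α` are integral over ℤ. Being rational,
they are integers because ℤ is integrally closed.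
-/

section Integral

variable {R A : Type*} [CommRing R] [Ring A] [Algebra R A]

open Polynomial in
theorem IsIntegral.star [StarRing R] [TrivialStar R] [StarRing A] [StarModule R A] {x : A}
    (hx : IsIntegral R x) : IsIntegral R (star x) := by
  obtain ⟨p, hp, hpx⟩ := hx
  refine ⟨p, hp, ?_⟩
  have haeval : aeval (Star.star x) p = Star.star (aeval x p) := by
    simp only [aeval_eq_sum_range, star_sum, star_smul, star_pow, star_trivial]
  rw [← aeval_def, haeval, aeval_def, hpx, star_zero]

open scoped IsMulCommutative in
theorem IsIntegral.add_mul_of_commute {x y : A} (hxy : Commute x y) (hx : IsIntegral R x)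
    (hy : IsIntegral R y) : IsIntegral R (x + y) ∧ IsIntegral R (x * y) := by
  let B := Algebra.adjoin R {x, y}
  have : IsMulCommutative B := Algebra.isMulCommutative_adjoin R <| by
    rintro _ (rfl | rfl) _ (rfl | rfl)
    exacts [rfl, hxy.eq, hxy.symm.eq, rfl]
  have hB (z : B) : IsIntegral R (z : A) ↔ IsIntegral R z :=
    isIntegral_algHom_iff B.val Subtype.val_injective
  have hxB := (hB ⟨x, Algebra.subset_adjoin (by simp)⟩).mp hx
  have hyB := (hB ⟨y, Algebra.subset_adjoin (by simp)⟩).mp hy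
  exact ⟨(hB _).mpr (hxB.add hyB), (hB _).mpr (hxB.mul hyB)⟩

end Integral

theorem exists_int_eq_of_isIntegral_algebraMap {A : Type*} [Ring A] [Algebra ℚ A] [Nontrivial A]
    {t : ℚ} (ht : IsIntegral ℤ (algebraMap ℚ A t)) : ∃ m : ℤ, t = m := by
  obtain ⟨m, hm⟩ := IsIntegrallyClosed.isIntegral_iff.mp
    ((isIntegral_algebraMap_iff (algebraMap ℚ A).injective).mp ht)
  exact ⟨m, by simpa using hm.symm⟩

theorem IsOrder.isIntegral {a b : ℚ} {O : Subring ℍ[ℚ, a, b]} (hO : IsOrder O) {α : ℍ[ℚ, a, b]}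
    (hα : α ∈ O) : IsIntegral ℤ α :=
  let ⟨⟨s, hs⟩, _⟩ := hO
  .of_mem_of_fg (subalgebraOfSubring O) ⟨s, SetLike.coe_injective hs⟩ α hα

namespace QuaternionAlgebra

variable {a b : ℚ}

theorem self_add_star_eq_algebraMap_redTrace (α : ℍ[ℚ, a, b]) :
    α + star α = algebraMap ℚ _ (redTrace α) := by
  simpa [redTrace] using self_add_star' α

theorem self_mul_star_eq_algebraMap_redNorm (α : ℍ[ℚ, a, b]) :
    α * star α = algebraMap ℚ _ (redNorm α) :=
  mul_star_eq_coe α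

end QuaternionAlgebra

open QuaternionAlgebra in
theorem redTrace_redNorm_isInteger_general (a b : ℚ)
    (O : Subring ℍ[ℚ, a, b]) (hO : IsOrder O) (α : ℍ[ℚ, a, b]) (hα : α ∈ O) :
    (∃ m : ℤ, redTrace α = (m : ℚ)) ∧ ∃ n : ℤ, redNorm α = (n : ℚ) := by
  have hαint := hO.isIntegral hα
  obtain ⟨htr, hnr⟩ := hαint.add_mul_of_commute (star_comm_self' α).symm hαint.star
  rw [self_add_star_eq_algebraMap_redTrace] at htr
  rw [self_mul_star_eq_algebraMap_redNorm] at hnr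
  exact ⟨exists_int_eq_of_isIntegral_algebraMap htr, exists_int_eq_of_isIntegral_algebraMap hnr⟩

/-- **Integrality of reduced traces and norms on orders.** For every element `α` of an
order `O` of `A = ℍ[ℚ, a, b]`, the reduced trace `tr(α) = α + star α` and the reduced
norm `nr(α) = normSq α` are (rational) integers. -/
theorem redTrace_redNorm_isInteger (a b : ℚ) (ha : a ≠ 0) (hb : b ≠ 0)
    (O : Subring ℍ[ℚ, a, b]) (hO : IsOrder O) (α : ℍ[ℚ, a, b]) (hα : α ∈ O) :
    (∃ m : ℤ, redTrace α = (m : ℚ)) ∧ ∃ n : ℤ, redNorm α = (n : ℚ) :=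
  redTrace_redNorm_isInteger_general a b O hO α hα
end
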